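/- Let E = (e_{ij}) be an H×H matrix with nonnegative entries and all row sums equal to 1, and let κ := ‖E − (1/H)𝟙𝟙ᵀE‖² (squared ℓ₂ operator norm, 𝟙 ∈ ℝ^H the all-ones vector). Let (λ_i)_{i=1}^H be vectors in ℝ^d, set λ̄_i := Σ_{j=1}^H e_{ij}λ_j, and let ρ ≥ 0 and (z_i)_{i=1}^H be vectors satisfying ‖z_i − λ̄_i‖² ≤ ρ·Σ_{j=1}^H e_{ij}‖λ_j − λ̄_i‖² for every i. Then for every w ∈ (0,1): Σ_{i=1}^H ‖z_i − (1/H)Σ_{j=1}^H z_j‖² ≤ (κ/(1−w) + 16ρH/w)·Σ_{i=1}^H ‖λ_i − (1/H)Σ_{j=1}^H λ_j‖². -/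

import Mathlib

/-!
Write `z i = λ̄ i + δ i` with `λ̄ i = ∑ j, e i j • λ j`. Young's inequality
`‖a + b‖² ≤ ‖a‖² / (1 - w) + ‖b‖² / w` splits the disagreement of `z` into those of `λ̄` and `δ`.
Since the rows of `M = E - (1/H) 𝟙 𝟙ᵀ E` sum to zero, `λ̄ i - mean λ̄ = ∑ j, M i j • (λ j - mean λ)`,
and applying the operator-norm bound of `M` to each coordinate bounds the disagreement of `λ̄` by
`κ` times that of `λ`. For `δ`, a disagreement is at most the plain sum of squares, and because a
weighted mean minimises the weighted second moment, the contraction condition gives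
`‖δ i‖² ≤ ρ ∑ j, ‖λ j - mean λ‖²`; summing over `i` yields `ρ H` in place of `16 ρ H`.
-/

open Finset

namespace Aggregation

variable {E : Type*} [NormedAddCommGroup E] [InnerProductSpace ℝ E]

theorem sum_mul_norm_sub_sq_eq {ι : Type*} (s : Finset ι) {e : ι → ℝ} (he : ∑ j ∈ s, e j = 1)
    (x : ι → E) (c : E) :
    ∑ j ∈ s, e j * ‖x j - c‖ ^ 2 =
      ∑ j ∈ s, e j * ‖x j - ∑ k ∈ s, e k • x k‖ ^ 2 + ‖∑ k ∈ s, e k • x k - c‖ ^ 2 := by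
  set m := ∑ k ∈ s, e k • x k
  have hcentered : ∑ j ∈ s, e j • (x j - m) = 0 := by
    simp only [smul_sub, sum_sub_distrib, ← sum_smul, he, one_smul, m, sub_self]
  have hsplit : ∀ j, ‖x j - c‖ ^ 2 = ‖x j - m‖ ^ 2 + 2 * inner ℝ (x j - m) (m - c) + ‖m - c‖ ^ 2 :=
    fun j => by rw [← norm_add_sq_real, sub_add_sub_cancel]
  have hcross : ∑ j ∈ s, e j * inner ℝ (x j - m) (m - c) = 0 := by
    simp only [← real_inner_smul_left, ← sum_inner, hcentered, inner_zero_left]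
  simp only [hsplit, mul_add, sum_add_distrib, ← sum_mul, he, one_mul, mul_left_comm _ (2 : ℝ),
    ← mul_sum, hcross, mul_zero, add_zero]

theorem sum_mul_norm_sub_sq_le_sum_norm_sub_sq {ι : Type*} (s : Finset ι) {e : ι → ℝ}
    (he0 : ∀ j ∈ s, 0 ≤ e j) (he : ∑ j ∈ s, e j = 1) (x : ι → E) (c : E) :
    ∑ j ∈ s, e j * ‖x j - ∑ k ∈ s, e k • x k‖ ^ 2 ≤ ∑ j ∈ s, ‖x j - c‖ ^ 2 := by
  have he1 : ∀ j ∈ s, e j ≤ 1 := fun j hj => he ▸ single_le_sum he0 hj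
  calc ∑ j ∈ s, e j * ‖x j - ∑ k ∈ s, e k • x k‖ ^ 2
      ≤ ∑ j ∈ s, e j * ‖x j - c‖ ^ 2 :=
        (sum_mul_norm_sub_sq_eq s he x c).symm ▸ le_add_of_nonneg_right (sq_nonneg _)
    _ ≤ ∑ j ∈ s, ‖x j - c‖ ^ 2 :=
        sum_le_sum fun j hj => mul_le_of_le_one_left (sq_nonneg _) (he1 j hj)

theorem norm_add_sq_le_div_add_div {F : Type*} [SeminormedAddCommGroup F] (a b : F) {w : ℝ}
    (hw0 : 0 < w) (hw1 : w < 1) :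
    ‖a + b‖ ^ 2 ≤ ‖a‖ ^ 2 / (1 - w) + ‖b‖ ^ 2 / w := by
  have titu := sq_sum_div_le_sum_sq_div univ ![‖a‖, ‖b‖] (g := ![1 - w, w])
    (by simp [Fin.forall_fin_two, hw0, hw1])
  simp only [Fin.sum_univ_two, Matrix.cons_val_zero, Matrix.cons_val_one, sub_add_cancel,
    div_one] at titu
  exact (pow_le_pow_left₀ (norm_nonneg _) (norm_add_le a b) 2).trans titu

theorem sum_norm_sum_smul_sq_le {m n ι : Type*} [Fintype m] [Fintype n] [DecidableEq n]
    [Fintype ι] (M : Matrix m n ℝ) (x : n → EuclideanSpace ℝ ι) :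
    ∑ i, ‖∑ j, M i j • x j‖ ^ 2 ≤
      ‖LinearMap.toContinuousLinearMap (Matrix.toEuclideanLin M)‖ ^ 2 * ∑ j, ‖x j‖ ^ 2 := by
  set T := LinearMap.toContinuousLinearMap (Matrix.toEuclideanLin M)
  let col : ι → EuclideanSpace ℝ n := fun c => WithLp.toLp 2 fun j => x j c
  have hT : ∀ c i, T (col c) i = (∑ j, M i j • x j) c := fun c i => by
    simp [T, col, Matrix.mulVec, dotProduct]
  calc ∑ i, ‖∑ j, M i j • x j‖ ^ 2 = ∑ c, ‖T (col c)‖ ^ 2 := by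
        simp only [EuclideanSpace.real_norm_sq_eq, hT]; exact sum_comm
    _ ≤ ∑ c, ‖T‖ ^ 2 * ‖col c‖ ^ 2 := by
        gcongr with c
        rw [← mul_pow]
        exact pow_le_pow_left₀ (norm_nonneg _) (T.le_opNorm _) 2
    _ = ‖T‖ ^ 2 * ∑ j, ‖x j‖ ^ 2 := by
        simp only [← mul_sum, EuclideanSpace.real_norm_sq_eq, col]
        rw [sum_comm]

variable {ι : Type*} [Fintype ι]

noncomputable def mean (v : ι → E) : E := (Fintype.card ι : ℝ)⁻¹ • ∑ j, v j

noncomputable def disagreement (v : ι → E) : ℝ := ∑ i, ‖v i - mean v‖ ^ 2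

theorem disagreement_nonneg (v : ι → E) : 0 ≤ disagreement v :=
  sum_nonneg fun _ _ => sq_nonneg _

theorem mean_add (u v : ι → E) : mean (u + v) = mean u + mean v := by
  simp only [mean, Pi.add_apply, sum_add_distrib, smul_add]

theorem disagreement_add_le (u v : ι → E) {w : ℝ} (hw0 : 0 < w) (hw1 : w < 1) :
    disagreement (u + v) ≤ disagreement u / (1 - w) + disagreement v / w := by
  have hsplit : ∀ i, (u + v) i - mean (u + v) = (u i - mean u) + (v i - mean v) := fun i => by
    rw [mean_add, Pi.add_apply]; abel
  simp only [disagreement, hsplit, sum_div, ← sum_add_distrib]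
  exact sum_le_sum fun i _ => norm_add_sq_le_div_add_div _ _ hw0 hw1

theorem disagreement_le_sum_norm_sq (v : ι → E) : disagreement v ≤ ∑ i, ‖v i‖ ^ 2 := by
  rcases isEmpty_or_nonempty ι with _ | _
  · simp [disagreement]
  have hn : (0 : ℝ) < Fintype.card ι := by exact_mod_cast Fintype.card_pos
  have huniform : ∑ _j : ι, (Fintype.card ι : ℝ)⁻¹ = 1 := by
    rw [sum_const, card_univ, nsmul_eq_mul, mul_inv_cancel₀ hn.ne']
  have key := sum_mul_norm_sub_sq_eq univ huniform v 0
  simp only [← smul_sum, sub_zero, ← mul_sum] at key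
  have : (Fintype.card ι : ℝ)⁻¹ * disagreement v ≤ (Fintype.card ι : ℝ)⁻¹ * ∑ i, ‖v i‖ ^ 2 :=
    key ▸ le_add_of_nonneg_right (sq_nonneg _)
  exact le_of_mul_le_mul_left this (inv_pos.mpr hn)

theorem disagreement_sum_smul_le {m n : Type*} [Fintype m] [DecidableEq m] [Fintype n]
    (P : Matrix m m ℝ) (hP : ∀ i, ∑ j, P i j = 1) (x : m → EuclideanSpace ℝ n) :
    disagreement (fun i => ∑ j, P i j • x j) ≤
      ‖LinearMap.toContinuousLinearMap (Matrix.toEuclideanLin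
          (P - Matrix.of fun _ j => (Fintype.card m : ℝ)⁻¹ * ∑ k, P k j))‖ ^ 2 *
        disagreement x := by
  set M := P - Matrix.of fun _ j => (Fintype.card m : ℝ)⁻¹ * ∑ k, P k j
  have hM : ∀ i, ∑ j, M i j = 0 := fun i => by
    have : Nonempty m := ⟨i⟩
    have hn : (Fintype.card m : ℝ) ≠ 0 := Nat.cast_ne_zero.mpr Fintype.card_ne_zero
    simp only [M, Matrix.sub_apply, Matrix.of_apply, sum_sub_distrib, hP, ← mul_sum]
    rw [sum_comm]
    simp [hP, hn]
  have hcentered : ∀ i, (∑ j, P i j • x j) - mean (fun i => ∑ j, P i j • x j) =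
      ∑ j, M i j • (x j - mean x) := fun i => by
    have hshift : ∑ j, M i j • (x j - mean x) = ∑ j, M i j • x j := by
      simp only [smul_sub, sum_sub_distrib, ← sum_smul, hM, zero_smul, sub_zero]
    rw [hshift]
    simp only [M, Matrix.sub_apply, Matrix.of_apply, sub_smul, sum_sub_distrib, mean, mul_smul,
      ← smul_sum, sum_smul]
    rw [sum_comm]
  simpa only [disagreement, hcentered] using sum_norm_sum_smul_sq_le M (fun j => x j - mean x)

end Aggregation

open Aggregation

theorem aggregation_step_disagreement_contraction_general
    (d H : ℕ)
    (Emat : Matrix (Fin H) (Fin H) ℝ)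
    (hEnn : ∀ i j, 0 ≤ Emat i j)
    (hErow : ∀ i, ∑ j, Emat i j = 1)
    (κ : ℝ)
    (hκ : κ = ‖LinearMap.toContinuousLinearMap
        (Matrix.toEuclideanLin
          (Emat - Matrix.of fun _ j => (H : ℝ)⁻¹ * ∑ k, Emat k j))‖ ^ 2)
    (lam z : Fin H → EuclideanSpace ℝ (Fin d))
    (ρ : ℝ) (hρ : 0 ≤ ρ)
    (hz : ∀ i,
      ‖z i - ∑ j, Emat i j • lam j‖ ^ 2
        ≤ ρ * ∑ j, Emat i j * ‖lam j - ∑ k, Emat i k • lam k‖ ^ 2) :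
    ∀ w ∈ Set.Ioo (0 : ℝ) 1,
      ∑ i, ‖z i - (H : ℝ)⁻¹ • ∑ j, z j‖ ^ 2
        ≤ (κ / (1 - w) + 16 * ρ * (H : ℝ) / w)
          * ∑ i, ‖lam i - (H : ℝ)⁻¹ • ∑ j, lam j‖ ^ 2 := by
  rintro w ⟨hw0, hw1⟩
  have hdis : ∀ v : Fin H → EuclideanSpace ℝ (Fin d),
      ∑ i, ‖v i - (H : ℝ)⁻¹ • ∑ j, v j‖ ^ 2 = disagreement v := fun v => by
    simp only [disagreement, mean, Fintype.card_fin]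
  set lbar : Fin H → EuclideanSpace ℝ (Fin d) := fun i => ∑ j, Emat i j • lam j
  set D := disagreement lam
  have hlbar : disagreement lbar ≤ κ * D := by
    simpa only [hκ, Fintype.card_fin] using disagreement_sum_smul_le Emat hErow lam
  have hδ : disagreement (z - lbar) ≤ H * (ρ * D) := by
    refine (disagreement_le_sum_norm_sq _).trans ?_
    calc ∑ i, ‖(z - lbar) i‖ ^ 2 ≤ ∑ _i : Fin H, ρ * D := sum_le_sum fun i _ =>
          (hz i).trans <| mul_le_mul_of_nonneg_left (sum_mul_norm_sub_sq_le_sum_norm_sub_sq univ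
            (fun j _ => hEnn i j) (hErow i) lam (mean lam)) hρ
      _ = H * (ρ * D) := by simp
  rw [hdis, hdis, ← add_sub_cancel lbar z]
  calc disagreement (lbar + (z - lbar))
      ≤ disagreement lbar / (1 - w) + disagreement (z - lbar) / w :=
        disagreement_add_le _ _ hw0 hw1
    _ ≤ κ * D / (1 - w) + H * (ρ * D) / w := by gcongr
    _ = (κ / (1 - w) + ρ * H / w) * D := by ring
    _ ≤ (κ / (1 - w) + 16 * ρ * H / w) * D := by
        gcongr (κ / (1 - w) + ?_ / w) * D
        · exact disagreement_nonneg lam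
        · have : 0 ≤ ρ * H := by positivity
          linarith

/-- **One-aggregation-step disagreement contraction for a robust aggregation
rule satisfying the contraction condition (Property 1).** -/
theorem aggregation_step_disagreement_contraction
    (d H : ℕ) (hH : 1 ≤ H)
    (Emat : Matrix (Fin H) (Fin H) ℝ)
    (hEnn : ∀ i j, 0 ≤ Emat i j)
    (hErow : ∀ i, ∑ j, Emat i j = 1)
    (κ : ℝ)
    (hκ : κ = ‖LinearMap.toContinuousLinearMap
        (Matrix.toEuclideanLin
          (Emat - Matrix.of fun _ j => (H : ℝ)⁻¹ * ∑ k, Emat k j))‖ ^ 2)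
    (lam z : Fin H → EuclideanSpace ℝ (Fin d))
    (ρ : ℝ) (hρ : 0 ≤ ρ)
    (hz : ∀ i,
      ‖z i - ∑ j, Emat i j • lam j‖ ^ 2
        ≤ ρ * ∑ j, Emat i j * ‖lam j - ∑ k, Emat i k • lam k‖ ^ 2) :
    ∀ w ∈ Set.Ioo (0 : ℝ) 1,
      ∑ i, ‖z i - (H : ℝ)⁻¹ • ∑ j, z j‖ ^ 2
        ≤ (κ / (1 - w) + 16 * ρ * (H : ℝ) / w)
          * ∑ i, ‖lam i - (H : ℝ)⁻¹ • ∑ j, lam j‖ ^ 2 :=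
  aggregation_step_disagreement_contraction_general d H Emat hEnn hErow κ hκ lam z ρ hρ hz
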